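/- arXiv:1607.07009 — 2 statements merged into one kernel-verified Lean document; each statement's English description precedes it below -/
import Mathlib

section
/- Let v_0, ..., v_{n-1} be affinely independent points in ℝ^{n-1} in canonical position (v_j has zero coordinates of index ≥ j and positive (j-1)-st coordinate for j ≥ 1). Then the canonical-position coordinates are uniquely determined by the pairwise distances d_{i,j} = ‖v_i − v_j‖ via the recursion: for k < j−1, v_{j,k} = (d_{j,0}² − d_{j,k+1}² + v_{k+1,k}² + Σ_{p=0}^{k−1}(v_{k+1,p}² − 2 v_{j,p} v_{k+1,p})) / (2 v_{k+1,k}), and v_{j,j−1} = sqrt(d_{j,0}² − Σ_{p=0}^{j−2} v_{j,p}²). -/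
/-!
Write `c_j` for the coordinate sequence of `v_j`; it vanishes from index `j` on, and `c_0 = 0`.
Hence `d_{j,0}² = Σ_p c_{j,p}²`, and since `c_{k+1}` is supported on `{0, …, k}`,
`d_{j,0}² − d_{j,k+1}² = Σ_{p ≤ k} (2 c_{j,p} c_{k+1,p} − c_{k+1,p}²)`, which is linear in `c_{j,k}`
with coefficient `2 c_{k+1,k} > 0`. Likewise `d_{j,0}² = Σ_{p < j−1} c_{j,p}² + c_{j,j−1}²` with
`c_{j,j−1} > 0`.
-/

open Finset

lemma Finset.sum_range_eq_of_forall_le_eq_zero {M : Type*} [AddCommMonoid M] {f : ℕ → M}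
    {k m : ℕ} (hkm : k ≤ m) (hf : ∀ i, k ≤ i → f i = 0) :
    ∑ i ∈ range m, f i = ∑ i ∈ range k, f i :=
  (sum_subset (range_subset_range.2 hkm) fun i _ hi => hf i (by simpa using hi)).symm

lemma EuclideanSpace.dist_sq_eq_sum_range {m : ℕ} (x y : EuclideanSpace ℝ (Fin m))
    {f g : ℕ → ℝ} (hf : ∀ i (h : i < m), f i = x ⟨i, h⟩) (hg : ∀ i (h : i < m), g i = y ⟨i, h⟩) :
    dist x y ^ 2 = ∑ i ∈ range m, (f i - g i) ^ 2 := by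
  rw [EuclideanSpace.dist_sq_eq, ← Fin.sum_univ_eq_sum_range (fun i => (f i - g i) ^ 2)]
  refine sum_congr rfl fun i _ => ?_
  rw [Real.dist_eq, sq_abs, hf i i.isLt, hg i i.isLt]

section Sequences

variable {a b : ℕ → ℝ} {k m : ℕ}

lemma sum_range_sq_sub_sum_range_sub_sq (hkm : k + 1 ≤ m) (hb : ∀ i, k + 1 ≤ i → b i = 0) :
    ∑ i ∈ range m, a i ^ 2 - ∑ i ∈ range m, (a i - b i) ^ 2
      = ∑ i ∈ range (k + 1), (2 * a i * b i - b i ^ 2) := by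
  rw [← sum_sub_distrib, sum_range_eq_of_forall_le_eq_zero hkm fun i hi => by simp [hb i hi]]
  exact sum_congr rfl fun i _ => by ring

lemma eq_div_of_sum_range_sq_sub_sum_range_sub_sq (hkm : k + 1 ≤ m)
    (hb : ∀ i, k + 1 ≤ i → b i = 0) (hbk : b k ≠ 0) :
    a k = (∑ i ∈ range m, a i ^ 2 - ∑ i ∈ range m, (a i - b i) ^ 2 + b k ^ 2
      + ∑ p ∈ range k, (b p ^ 2 - 2 * a p * b p)) / (2 * b k) := by
  have hcancel : ∑ p ∈ range k, (2 * a p * b p - b p ^ 2)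
      + ∑ p ∈ range k, (b p ^ 2 - 2 * a p * b p) = 0 := by
    rw [← sum_add_distrib]
    exact sum_eq_zero fun p _ => by ring
  rw [sum_range_sq_sub_sum_range_sub_sq hkm hb, sum_range_succ, eq_div_iff (by simpa)]
  linarith

lemma eq_sqrt_sum_range_sq_sub (hkm : k + 1 ≤ m) (ha : ∀ i, k + 1 ≤ i → a i = 0)
    (hak : 0 ≤ a k) :
    a k = √(∑ i ∈ range m, a i ^ 2 - ∑ p ∈ range k, a p ^ 2) := by
  rw [sum_range_eq_of_forall_le_eq_zero hkm fun i hi => by simp [ha i hi], sum_range_succ,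
    add_sub_cancel_left, Real.sqrt_sq hak]

end Sequences

open Finset in
/-- For affinely independent points in canonical position in `ℝ^{n-1}`, the canonical
coordinates are determined from the pairwise distances by the recursion of the paper:
for `k < j - 1`,
`v_{j,k} = (d_{j,0}² − d_{j,k+1}² + v_{k+1,k}² + Σ_{p<k}(v_{k+1,p}² − 2 v_{j,p} v_{k+1,p})) / (2 v_{k+1,k})`,
and `v_{j,j−1} = sqrt(d_{j,0}² − Σ_{p<j−1} v_{j,p}²)`. -/
theorem canonical_coordinates_recursion (n : ℕ) (hn : 2 ≤ n)
    (v : Fin n → EuclideanSpace ℝ (Fin (n - 1)))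
    (c : Fin n → ℕ → ℝ)
    (hc : ∀ (j : Fin n) (k : ℕ) (h : k < n - 1), c j k = v j ⟨k, h⟩)
    (hcanon : ∀ (j : Fin n) (k : ℕ), (j : ℕ) ≤ k → c j k = 0)
    (hpos : ∀ j : Fin n, 1 ≤ (j : ℕ) → 0 < c j ((j : ℕ) - 1)) :
    (∀ (j : Fin n) (k : ℕ) (hk : k + 1 < (j : ℕ)),
      c j k = (dist (v j) (v ⟨0, by omega⟩) ^ 2
          - dist (v j) (v ⟨k + 1, by omega⟩) ^ 2
          + c ⟨k + 1, by omega⟩ k ^ 2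
          + ∑ p ∈ range k, (c ⟨k + 1, by omega⟩ p ^ 2 - 2 * c j p * c ⟨k + 1, by omega⟩ p))
        / (2 * c ⟨k + 1, by omega⟩ k)) ∧
    (∀ j : Fin n, 1 ≤ (j : ℕ) →
      c j ((j : ℕ) - 1) =
        Real.sqrt (dist (v j) (v ⟨0, by omega⟩) ^ 2 - ∑ p ∈ range ((j : ℕ) - 1), c j p ^ 2)) := by
  have hdist (a b : Fin n) : dist (v a) (v b) ^ 2 = ∑ i ∈ range (n - 1), (c a i - c b i) ^ 2 :=
    EuclideanSpace.dist_sq_eq_sum_range _ _ (hc a) (hc b)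
  have hdist_zero (a : Fin n) (h : 0 < n) :
      dist (v a) (v ⟨0, h⟩) ^ 2 = ∑ i ∈ range (n - 1), c a i ^ 2 := by
    simp [hdist, hcanon ⟨0, h⟩]
  constructor
  · intro j k hk
    rw [hdist_zero, hdist]
    exact eq_div_of_sum_range_sq_sub_sum_range_sub_sq (by omega) (hcanon ⟨k + 1, by omega⟩)
      (hpos ⟨k + 1, by omega⟩ le_add_self).ne'
  · intro j hj
    obtain ⟨i, hi⟩ : ∃ i, (j : ℕ) = i + 1 := ⟨j - 1, by omega⟩
    have hji : (j : ℕ) - 1 = i := by omega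
    rw [hdist_zero, hji]
    exact eq_sqrt_sum_range_sq_sub (by omega) (fun p hp => hcanon j p (by omega))
      (hji ▸ (hpos j hj).le)
end

section
/- Let v_0 = 0, v_1, v_2 ∈ ℝ² with v_1, v_2 affinely independent, o on the opposite side of the line through v_1, v_2 from v_0. If the segment from o to v_0 intersects the line through v_1 and v_2 at a point outside the segment [v_1, v_2], say on the far side of v_1, then min over q ∈ [v_1, v_2] of (‖o − q‖ + ‖q − v_0‖) is attained at q = v_1 and equals ‖o − v_1‖ + ‖v_1 − v_0‖. -/
/-- When the segment from `o` to the apex `v₀ = 0` meets the line through `v₁, v₂` at a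
point `(1−t) v₁ + t v₂` with `t < 0` (on the far side of `v₁`), the minimum of
`q ↦ ‖o − q‖ + ‖q − v₀‖` over the segment `[v₁, v₂]` is attained at `q = v₁` and equals
`‖o − v₁‖ + ‖v₁ − v₀‖`. -/
theorem spherical_extrapolation_2d_face (v₁ v₂ o : EuclideanSpace ℝ (Fin 2))
    (hv : AffineIndependent ℝ ![v₁, v₂])
    (f : EuclideanSpace ℝ (Fin 2) →ᵃ[ℝ] ℝ)
    (hf1 : f v₁ = 0) (hf2 : f v₂ = 0)
    (hopp : f o * f (0 : EuclideanSpace ℝ (Fin 2)) < 0)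
    (hfar : ∃ t : ℝ, t < 0 ∧
      ((1 - t) • v₁ + t • v₂) ∈ segment ℝ o (0 : EuclideanSpace ℝ (Fin 2))) :
    IsLeast ((fun q => ‖o - q‖ + ‖q - (0 : EuclideanSpace ℝ (Fin 2))‖) '' segment ℝ v₁ v₂)
      (‖o - v₁‖ + ‖v₁ - (0 : EuclideanSpace ℝ (Fin 2))‖) := by
  obtain ⟨t, ht, hp⟩ := hfar
  set p : EuclideanSpace ℝ (Fin 2) := (1 - t) • v₁ + t • v₂ with hpdef
  -- p lies on segment [o, 0], hence ‖o - p‖ + ‖p‖ = ‖o‖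
  have hop : ‖o - p‖ + ‖p‖ = ‖o‖ := by
    obtain ⟨α, β, hα, hβ, hαβ, hq⟩ := hp
    have hpα : p = α • o := by rw [← hq]; simp
    have h1 : o - α • o = (1 - α) • o := by rw [sub_smul, one_smul]
    rw [hpα, h1, norm_smul, norm_smul, Real.norm_eq_abs, Real.norm_eq_abs,
      abs_of_nonneg (by linarith : (0:ℝ) ≤ 1 - α), abs_of_nonneg hα]
    ring
  constructor
  · exact ⟨v₁, left_mem_segment ℝ v₁ v₂, rfl⟩
  · rintro x ⟨q, ⟨a, b, ha, hb, hab, rfl⟩, rfl⟩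
    set q : EuclideanSpace ℝ (Fin 2) := a • v₁ + b • v₂ with hqdef
    have hbt : (0:ℝ) < b - t := by linarith
    set θ : ℝ := b / (b - t) with hθdef
    have hθ0 : 0 ≤ θ := div_nonneg hb hbt.le
    have hθ1 : θ ≤ 1 := by rw [div_le_one hbt]; linarith
    have ha' : a = 1 - b := by linarith
    have hv1 : v₁ = θ • p + (1 - θ) • q := by
      rw [hqdef, hpdef, hθdef, ha']
      match_scalars <;> field_simp <;> ring
    have e1 : o - v₁ = θ • (o - p) + (1 - θ) • (o - q) := by
      rw [hv1]; module
    have htri : ‖o‖ ≤ ‖o - q‖ + ‖q‖ := by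
      calc ‖o‖ = ‖(o - q) + q‖ := by rw [sub_add_cancel]
        _ ≤ ‖o - q‖ + ‖q‖ := norm_add_le _ _
    simp only [sub_zero]
    calc ‖o - v₁‖ + ‖v₁‖
        = ‖θ • (o - p) + (1 - θ) • (o - q)‖ + ‖θ • p + (1 - θ) • q‖ := by
          rw [← e1, ← hv1]
      _ ≤ (‖θ • (o - p)‖ + ‖(1 - θ) • (o - q)‖) + (‖θ • p‖ + ‖(1 - θ) • q‖) :=
          add_le_add (norm_add_le _ _) (norm_add_le _ _)
      _ = θ * (‖o - p‖ + ‖p‖) + (1 - θ) * (‖o - q‖ + ‖q‖) := by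
          simp only [norm_smul, Real.norm_eq_abs, abs_of_nonneg hθ0,
            abs_of_nonneg (by linarith : (0:ℝ) ≤ 1 - θ)]
          ring
      _ = θ * ‖o‖ + (1 - θ) * (‖o - q‖ + ‖q‖) := by rw [hop]
      _ ≤ θ * (‖o - q‖ + ‖q‖) + (1 - θ) * (‖o - q‖ + ‖q‖) :=
          add_le_add (mul_le_mul_of_nonneg_left htri hθ0) le_rfl
      _ = ‖o - q‖ + ‖q‖ := by ring
end
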